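/- arXiv:2305.00072 — 4 statements merged into one kernel-verified Lean document; each statement's English description precedes it below -/
import Mathlib

section
/- Let (w₁, w₂) be a classical solution of system (W) on ℝ × [0,T] and let a < b be real numbers. Then the function t ↦ ∫ₐᵇ (w₁²(x,t) + w₂²(x,t)) dx is differentiable on (0,T) with derivative equal to w₁²(b,t) − w₁²(a,t) − w₂²(b,t) + w₂²(a,t). -/
/-!
Differentiate under the integral sign, which is legitimate because `w₁² + w₂²` is `C¹` on a
compact neighbourhood of `[a, b] × {t}`. In the resulting integrand the coupling terms
`∓ 2 N w₁ w₂` cancel, so the energy density obeys the conservation law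
`∂ₜ(w₁² + w₂²) = ∂ₓ(w₁² − w₂²)`, and the fundamental theorem of calculus turns the integral of
the flux derivative into the boundary terms.
-/

open Real Set Filter MeasureTheory

/-- The nonlinear coefficient `N(u,v) = N₀(√(u² + v²))`. -/
noncomputable def Ncoef (N₀ : ℝ → ℝ) (u v : ℝ) : ℝ :=
  N₀ (Real.sqrt (u ^ 2 + v ^ 2))

/-- `(w₁, w₂)` is a classical solution of system (W),
`∂ₜw₁ = ∂ₓw₁ − N(w₁,w₂)·w₂`, `∂ₜw₂ = −∂ₓw₂ + N(w₁,w₂)·w₁`, on `ℝ × [0, T]`: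
a pair of `C¹` functions satisfying the equations pointwise. -/
def IsSolW (N₀ : ℝ → ℝ) (T : ℝ) (w₁ w₂ : ℝ → ℝ → ℝ) : Prop :=
  ContDiffOn ℝ 1 (fun p : ℝ × ℝ => w₁ p.1 p.2) (Set.univ ×ˢ Set.Icc 0 T) ∧
  ContDiffOn ℝ 1 (fun p : ℝ × ℝ => w₂ p.1 p.2) (Set.univ ×ˢ Set.Icc 0 T) ∧
  ∀ x : ℝ, ∀ t ∈ Set.Icc (0 : ℝ) T,
    deriv (fun s => w₁ x s) t
        = deriv (fun y => w₁ y t) x - Ncoef N₀ (w₁ x t) (w₂ x t) * w₂ x t ∧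
    deriv (fun s => w₂ x s) t
        = - deriv (fun y => w₂ y t) x + Ncoef N₀ (w₁ x t) (w₂ x t) * w₁ x t

section PartialDerivatives

variable {E : Type*} [NormedAddCommGroup E] [NormedSpace ℝ E] {f : ℝ × ℝ → E}

theorem DifferentiableAt.hasDerivAt_slice_fst {x t : ℝ} (hf : DifferentiableAt ℝ f (x, t)) :
    HasDerivAt (fun y => f (y, t)) (fderiv ℝ f (x, t) (1, 0)) x :=
  hf.hasFDerivAt.comp_hasDerivAt x ((hasDerivAt_id x).prodMk (hasDerivAt_const x t))

theorem DifferentiableAt.hasDerivAt_slice_snd {x t : ℝ} (hf : DifferentiableAt ℝ f (x, t)) :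
    HasDerivAt (fun s => f (x, s)) (fderiv ℝ f (x, t) (0, 1)) t :=
  hf.hasFDerivAt.comp_hasDerivAt t ((hasDerivAt_const t x).prodMk (hasDerivAt_id t))

theorem ContDiffOn.continuousOn_deriv_slice_snd {U : Set (ℝ × ℝ)} (hU : IsOpen U)
    (hf : ContDiffOn ℝ 1 f U) :
    ContinuousOn (fun p : ℝ × ℝ => deriv (fun s => f (p.1, s)) p.2) U := by
  refine ((hf.continuousOn_fderiv_of_isOpen hU le_rfl).clm_apply
    (continuousOn_const (c := ((0 : ℝ), (1 : ℝ))))).congr ?_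
  intro p hp
  exact ((hf.differentiableOn one_ne_zero p hp).differentiableAt
    (hU.mem_nhds hp)).hasDerivAt_slice_snd.deriv

theorem hasDerivAt_intervalIntegral_of_contDiffOn {U : Set (ℝ × ℝ)} (hU : IsOpen U)
    (hf : ContDiffOn ℝ 1 f U) {a b t : ℝ} (hsub : uIcc a b ×ˢ {t} ⊆ U) :
    HasDerivAt (fun s => ∫ x in a..b, f (x, s))
      (∫ x in a..b, deriv (fun s => f (x, s)) t) t := by
  obtain ⟨W, V, -, hV, hW, htV, hWV⟩ :=
    generalized_tube_lemma isCompact_uIcc isCompact_singleton hU hsub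
  obtain ⟨ε, hε, hball⟩ := Metric.nhds_basis_closedBall.mem_iff.mp (hV.mem_nhds (htV rfl))
  have hKU : uIcc a b ×ˢ Metric.closedBall t ε ⊆ U :=
    (prod_mono hW hball).trans hWV
  have hslice : ∀ s ∈ Metric.closedBall t ε, ContinuousOn (fun x => f (x, s)) (uIcc a b) :=
    fun s hs => hf.continuousOn.comp (by fun_prop) fun x hx => hKU ⟨hx, hs⟩
  have hdiff : ∀ x ∈ uIcc a b, ∀ s ∈ Metric.closedBall t ε,
      HasDerivAt (fun s => f (x, s)) (deriv (fun s => f (x, s)) s) s := fun x hx s hs =>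
    ((hf.differentiableOn one_ne_zero _ (hKU ⟨hx, hs⟩)).differentiableAt
      (hU.mem_nhds (hKU ⟨hx, hs⟩))).hasDerivAt_slice_snd.differentiableAt.hasDerivAt
  have hderiv_slice : ContinuousOn (fun x => deriv (fun s => f (x, s)) t) (uIcc a b) :=
    (hf.continuousOn_deriv_slice_snd hU).comp (continuousOn_id.prodMk continuousOn_const)
      fun x hx => hKU ⟨hx, Metric.mem_closedBall_self hε.le⟩
  obtain ⟨C, hC⟩ := (isCompact_uIcc.prod (isCompact_closedBall t ε)).exists_bound_of_continuousOn
    ((hf.continuousOn_deriv_slice_snd hU).mono hKU)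
  refine (intervalIntegral.hasDerivAt_integral_of_dominated_loc_of_deriv_le (μ := volume)
    (F := fun s x => f (x, s)) (F' := fun s x => deriv (fun s => f (x, s)) s)
    (bound := fun _ => C) (Metric.closedBall_mem_nhds t hε) ?_
    (hslice t (Metric.mem_closedBall_self hε.le)).intervalIntegrable
    ((hderiv_slice.mono uIoc_subset_uIcc).aestronglyMeasurable measurableSet_uIoc)
    ?_ intervalIntegrable_const ?_).2
  · filter_upwards [Metric.closedBall_mem_nhds t hε] with s hs
    exact ((hslice s hs).mono uIoc_subset_uIcc).aestronglyMeasurable measurableSet_uIoc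
  · exact Eventually.of_forall fun x hx s hs => hC (x, s) ⟨uIoc_subset_uIcc hx, hs⟩
  · exact Eventually.of_forall fun x hx s hs => hdiff x (uIoc_subset_uIcc hx) s hs

theorem ContDiffOn.differentiableAt_of_snd_mem_Ioo {a b x t : ℝ}
    (hf : ContDiffOn ℝ 1 f (univ ×ˢ Icc a b)) (ht : t ∈ Ioo a b) :
    DifferentiableAt ℝ f (x, t) :=
  (hf.differentiableOn one_ne_zero _ ⟨trivial, Ioo_subset_Icc_self ht⟩).differentiableAt
    (prod_mem_nhds univ_mem (Icc_mem_nhds ht.1 ht.2))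

end PartialDerivatives

variable {N₀ : ℝ → ℝ} {T : ℝ} {w₁ w₂ : ℝ → ℝ → ℝ}

theorem IsSolW.deriv_energy_eq_deriv_flux (h : IsSolW N₀ T w₁ w₂) {t : ℝ} (ht : t ∈ Ioo 0 T)
    (x : ℝ) :
    deriv (fun s => w₁ x s ^ 2 + w₂ x s ^ 2) t = deriv (fun y => w₁ y t ^ 2 - w₂ y t ^ 2) x := by
  have hx₁ : DifferentiableAt ℝ (fun y => w₁ y t) x :=
    (h.1.differentiableAt_of_snd_mem_Ioo ht).hasDerivAt_slice_fst.differentiableAt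
  have hx₂ : DifferentiableAt ℝ (fun y => w₂ y t) x :=
    (h.2.1.differentiableAt_of_snd_mem_Ioo ht).hasDerivAt_slice_fst.differentiableAt
  have ht₁ : DifferentiableAt ℝ (fun s => w₁ x s) t :=
    (h.1.differentiableAt_of_snd_mem_Ioo ht).hasDerivAt_slice_snd.differentiableAt
  have ht₂ : DifferentiableAt ℝ (fun s => w₂ x s) t :=
    (h.2.1.differentiableAt_of_snd_mem_Ioo ht).hasDerivAt_slice_snd.differentiableAt
  obtain ⟨hw₁, hw₂⟩ := h.2.2 x t (Ioo_subset_Icc_self ht)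
  rw [((ht₁.hasDerivAt.fun_pow 2).fun_add (ht₂.hasDerivAt.fun_pow 2)).deriv,
    ((hx₁.hasDerivAt.fun_pow 2).fun_sub (hx₂.hasDerivAt.fun_pow 2)).deriv, hw₁, hw₂]
  ring

theorem stmt3_general (N₀ : ℝ → ℝ) (T : ℝ) (w₁ w₂ : ℝ → ℝ → ℝ)
    (h : IsSolW N₀ T w₁ w₂) (a b : ℝ) :
    ∀ t ∈ Set.Ioo (0 : ℝ) T,
      HasDerivAt (fun s => ∫ x in a..b, (w₁ x s ^ 2 + w₂ x s ^ 2))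
        (w₁ b t ^ 2 - w₁ a t ^ 2 - w₂ b t ^ 2 + w₂ a t ^ 2) t := by
  intro t ht
  have henergy : ContDiffOn ℝ 1 (fun p : ℝ × ℝ => w₁ p.1 p.2 ^ 2 + w₂ p.1 p.2 ^ 2)
      (univ ×ˢ Ioo 0 T) :=
    ((h.1.pow 2).add (h.2.1.pow 2)).mono (prod_mono subset_rfl Ioo_subset_Icc_self)
  have hflux : ContDiffOn ℝ 1 (fun y => w₁ y t ^ 2 - w₂ y t ^ 2) (uIcc a b) :=
    ((h.1.pow 2).sub (h.2.1.pow 2)).comp (contDiff_id.prodMk contDiff_const).contDiffOn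
      fun _ _ => ⟨trivial, Ioo_subset_Icc_self ht⟩
  have hleibniz := hasDerivAt_intervalIntegral_of_contDiffOn (isOpen_univ.prod isOpen_Ioo)
    henergy (a := a) (b := b) fun p hp => ⟨trivial, (mem_singleton_iff.mp hp.2) ▸ ht⟩
  rw [intervalIntegral.integral_congr fun x _ => h.deriv_energy_eq_deriv_flux ht x,
    intervalIntegral.integral_deriv_of_contDiffOn_uIcc hflux] at hleibniz
  exact hleibniz.congr_deriv (by ring)

/-- for a classical solution of system (W) and `a < b`,
the map `t ↦ ∫ₐᵇ (w₁² + w₂²) dx` is differentiable on `(0,T)` with derivative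
`w₁²(b,t) − w₁²(a,t) − w₂²(b,t) + w₂²(a,t)`. -/
theorem stmt3 (N₀ : ℝ → ℝ) (T : ℝ) (w₁ w₂ : ℝ → ℝ → ℝ)
    (h : IsSolW N₀ T w₁ w₂) (a b : ℝ) (hab : a < b) :
    ∀ t ∈ Set.Ioo (0 : ℝ) T,
      HasDerivAt (fun s => ∫ x in a..b, (w₁ x s ^ 2 + w₂ x s ^ 2))
        (w₁ b t ^ 2 - w₁ a t ^ 2 - w₂ b t ^ 2 + w₂ a t ^ 2) t :=
  stmt3_general N₀ T w₁ w₂ h a b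
end

section
/- Let (b₁, b₂) be a classical solution of system (B) on ℝ × [0,T] and let a < b be real numbers. Then the function t ↦ ∫ₐᵇ (b₁²(x,t) + b₂²(x,t)) dx is differentiable on (0,T) with derivative equal to 2·b₁(b,t)·b₂(b,t) − 2·b₁(a,t)·b₂(a,t). -/
/-!
Multiplying the equations of (B) by `b₁` and `b₂` and adding, the nonlinear terms cancel:
`∂ₜ(b₁² + b₂²) = 2 b₁ ∂ₓb₂ + 2 b₂ ∂ₓb₁ = ∂ₓ(2 b₁ b₂)`. Differentiating under the integral sign
(legitimate since the integrand is `C¹` on a compact neighbourhood of `[a, b] × {t}`) and applying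
the fundamental theorem of calculus in `x` gives the boundary flux.
-/

open Real Set Filter MeasureTheory

/-- `(b₁, b₂)` is a classical solution of system (B),
`∂ₜb₁ = ∂ₓb₂ + N₀(√(b₁²+b₂²))·b₂`, `∂ₜb₂ = ∂ₓb₁ − N₀(√(b₁²+b₂²))·b₁`, on `ℝ × [0, T]`:
a pair of `C¹` functions satisfying the equations pointwise. -/
def IsSolB (N₀ : ℝ → ℝ) (T : ℝ) (b₁ b₂ : ℝ → ℝ → ℝ) : Prop :=
  ContDiffOn ℝ 1 (fun p : ℝ × ℝ => b₁ p.1 p.2) (Set.univ ×ˢ Set.Icc 0 T) ∧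
  ContDiffOn ℝ 1 (fun p : ℝ × ℝ => b₂ p.1 p.2) (Set.univ ×ˢ Set.Icc 0 T) ∧
  ∀ x : ℝ, ∀ t ∈ Set.Icc (0 : ℝ) T,
    deriv (fun s => b₁ x s) t
        = deriv (fun y => b₂ y t) x + Ncoef N₀ (b₁ x t) (b₂ x t) * b₂ x t ∧
    deriv (fun s => b₂ x s) t
        = deriv (fun y => b₁ y t) x - Ncoef N₀ (b₁ x t) (b₂ x t) * b₁ x t

open Metric

section PartialDerivatives

variable {E : Type*} [NormedAddCommGroup E] [NormedSpace ℝ E] {f : ℝ → ℝ → E} {U : Set ℝ}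

theorem ContDiffOn.contDiff_curry_left
    (hf : ContDiffOn ℝ 1 (fun p : ℝ × ℝ => f p.1 p.2) (univ ×ˢ U)) {t : ℝ} (ht : t ∈ U) :
    ContDiff ℝ 1 (fun x => f x t) :=
  hf.comp_contDiff (contDiff_id.prodMk contDiff_const) fun x => ⟨mem_univ x, ht⟩

theorem ContDiffOn.hasDerivAt_curry_right (hU : IsOpen U)
    (hf : ContDiffOn ℝ 1 (fun p : ℝ × ℝ => f p.1 p.2) (univ ×ˢ U)) {x t : ℝ} (ht : t ∈ U) :
    HasDerivAt (fun s => f x s) (fderiv ℝ (fun p : ℝ × ℝ => f p.1 p.2) (x, t) (0, 1)) t := by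
  have hdiff : DifferentiableAt ℝ (fun p : ℝ × ℝ => f p.1 p.2) (x, t) :=
    (hf.contDiffAt ((isOpen_univ.prod hU).mem_nhds ⟨mem_univ x, ht⟩)).differentiableAt
      one_ne_zero
  exact hdiff.hasFDerivAt.comp_hasDerivAt t ((hasDerivAt_const t x).prodMk (hasDerivAt_id t))

theorem ContDiffOn.continuousOn_deriv_curry_right (hU : IsOpen U)
    (hf : ContDiffOn ℝ 1 (fun p : ℝ × ℝ => f p.1 p.2) (univ ×ˢ U)) :
    ContinuousOn (fun p : ℝ × ℝ => deriv (fun s => f p.1 s) p.2) (univ ×ˢ U) := by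
  refine ((hf.continuousOn_fderiv_of_isOpen (isOpen_univ.prod hU) le_rfl).clm_apply
    (continuousOn_const (c := ((0 : ℝ), (1 : ℝ))))).congr fun p hp => ?_
  exact (hf.hasDerivAt_curry_right hU hp.2).deriv

theorem ContDiffOn.hasDerivAt_intervalIntegral_curry (hU : IsOpen U)
    (hf : ContDiffOn ℝ 1 (fun p : ℝ × ℝ => f p.1 p.2) (univ ×ˢ U)) {t : ℝ} (ht : t ∈ U)
    (a b : ℝ) :
    HasDerivAt (fun s => ∫ x in a..b, f x s) (∫ x in a..b, deriv (fun s => f x s) t) t := by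
  obtain ⟨ε, hε, hεU⟩ := nhds_basis_closedBall.mem_iff.1 (hU.mem_nhds ht)
  have hK : uIcc a b ×ˢ closedBall t ε ⊆ univ ×ˢ U := prod_mono (subset_univ _) hεU
  obtain ⟨C, hC⟩ := (isCompact_uIcc.prod (isCompact_closedBall t ε)).exists_bound_of_continuousOn
    ((hf.continuousOn_deriv_curry_right hU).mono hK)
  have hpartial : Continuous fun x => deriv (fun s => f x s) t :=
    (hf.continuousOn_deriv_curry_right hU).comp_continuous
      (continuous_id.prodMk continuous_const) fun x => ⟨mem_univ x, ht⟩
  refine (intervalIntegral.hasDerivAt_integral_of_dominated_loc_of_deriv_le (bound := fun _ => C)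
    (F := fun s x => f x s) (F' := fun s x => deriv (fun τ => f x τ) s)
    (ball_mem_nhds t hε) ?_ ((hf.contDiff_curry_left ht).continuous.intervalIntegrable a b)
    hpartial.aestronglyMeasurable ?_ intervalIntegrable_const ?_).2
  · filter_upwards [ball_mem_nhds t hε] with s hs
    exact (hf.contDiff_curry_left (hεU (ball_subset_closedBall hs))).continuous.aestronglyMeasurable
  · exact ae_of_all _ fun x hx s hs => hC (x, s) ⟨uIoc_subset_uIcc hx, ball_subset_closedBall hs⟩
  · exact ae_of_all _ fun x _ s hs =>
      (hf.hasDerivAt_curry_right hU (hεU (ball_subset_closedBall hs))).differentiableAt.hasDerivAt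

end PartialDerivatives

namespace IsSolB

variable {N₀ : ℝ → ℝ} {T : ℝ} {b₁ b₂ : ℝ → ℝ → ℝ}

theorem contDiffOn_left (h : IsSolB N₀ T b₁ b₂) :
    ContDiffOn ℝ 1 (fun p : ℝ × ℝ => b₁ p.1 p.2) (univ ×ˢ Ioo 0 T) :=
  h.1.mono (prod_mono subset_rfl Ioo_subset_Icc_self)

theorem contDiffOn_right (h : IsSolB N₀ T b₁ b₂) :
    ContDiffOn ℝ 1 (fun p : ℝ × ℝ => b₂ p.1 p.2) (univ ×ˢ Ioo 0 T) :=
  h.2.1.mono (prod_mono subset_rfl Ioo_subset_Icc_self)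

theorem deriv_energyDensity_eq_deriv_flux (h : IsSolB N₀ T b₁ b₂) (x : ℝ) {t : ℝ}
    (ht : t ∈ Ioo 0 T) :
    deriv (fun s => b₁ x s ^ 2 + b₂ x s ^ 2) t = deriv (fun y => 2 * b₁ y t * b₂ y t) x := by
  have hs₁ := (h.contDiffOn_left.hasDerivAt_curry_right isOpen_Ioo (x := x) ht).differentiableAt
  have hs₂ := (h.contDiffOn_right.hasDerivAt_curry_right isOpen_Ioo (x := x) ht).differentiableAt
  have hy₁ := (h.contDiffOn_left.contDiff_curry_left ht).differentiable one_ne_zero x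
  have hy₂ := (h.contDiffOn_right.contDiff_curry_left ht).differentiable one_ne_zero x
  obtain ⟨hpde₁, hpde₂⟩ := h.2.2 x t (Ioo_subset_Icc_self ht)
  rw [((hs₁.hasDerivAt.fun_pow 2).fun_add (hs₂.hasDerivAt.fun_pow 2)).deriv,
    ((hy₁.hasDerivAt.const_mul 2).fun_mul hy₂.hasDerivAt).deriv, hpde₁, hpde₂]
  ring

end IsSolB

theorem stmt4_general (N₀ : ℝ → ℝ) (T : ℝ) (b₁ b₂ : ℝ → ℝ → ℝ)
    (h : IsSolB N₀ T b₁ b₂) (a b : ℝ) :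
    ∀ t ∈ Set.Ioo (0 : ℝ) T,
      HasDerivAt (fun s => ∫ x in a..b, (b₁ x s ^ 2 + b₂ x s ^ 2))
        (2 * b₁ b t * b₂ b t - 2 * b₁ a t * b₂ a t) t := by
  intro t ht
  have henergy : ContDiffOn ℝ 1 (fun p : ℝ × ℝ => b₁ p.1 p.2 ^ 2 + b₂ p.1 p.2 ^ 2)
      (univ ×ˢ Ioo 0 T) :=
    (h.contDiffOn_left.pow 2).add (h.contDiffOn_right.pow 2)
  have hflux : ContDiff ℝ 1 (fun y => 2 * b₁ y t * b₂ y t) :=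
    (contDiff_const.mul (h.contDiffOn_left.contDiff_curry_left ht)).mul
      (h.contDiffOn_right.contDiff_curry_left ht)
  refine (henergy.hasDerivAt_intervalIntegral_curry isOpen_Ioo ht a b).congr_deriv ?_
  calc ∫ x in a..b, deriv (fun s => b₁ x s ^ 2 + b₂ x s ^ 2) t
      = ∫ x in a..b, deriv (fun y => 2 * b₁ y t * b₂ y t) x :=
        intervalIntegral.integral_congr fun x _ => h.deriv_energyDensity_eq_deriv_flux x ht
    _ = 2 * b₁ b t * b₂ b t - 2 * b₁ a t * b₂ a t :=
        intervalIntegral.integral_deriv_eq_sub (fun x _ => hflux.differentiable one_ne_zero x)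
          ((hflux.continuous_deriv le_rfl).intervalIntegrable a b)

/-- for a classical solution of system (B) and `a < b`,
the map `t ↦ ∫ₐᵇ (b₁² + b₂²) dx` is differentiable on `(0,T)` with derivative
`2·b₁(b,t)·b₂(b,t) − 2·b₁(a,t)·b₂(a,t)`. -/
theorem stmt4 (N₀ : ℝ → ℝ) (T : ℝ) (b₁ b₂ : ℝ → ℝ → ℝ)
    (h : IsSolB N₀ T b₁ b₂) (a b : ℝ) (hab : a < b) :
    ∀ t ∈ Set.Ioo (0 : ℝ) T,
      HasDerivAt (fun s => ∫ x in a..b, (b₁ x s ^ 2 + b₂ x s ^ 2))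
        (2 * b₁ b t * b₂ b t - 2 * b₁ a t * b₂ a t) t :=
  stmt4_general N₀ T b₁ b₂ h a b
end

section
/- Let (w₁, w₂) be a classical solution of system (W) on ℝ × [0,T] such that for each t ∈ [0,T] the functions x ↦ w₁(x,t)² and x ↦ w₂(x,t)² are integrable on ℝ, w₁(x,t) → 0 and w₂(x,t) → 0 as |x| → ∞, and on each compact time interval the functions |wᵢ·∂ₜwᵢ| are dominated by an integrable function of x. Then the energy E(t) = ∫_ℝ (w₁²(x,t) + w₂²(x,t)) dx is constant in t: E(t) = E(0) for all t ∈ [0,T]. -/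
/-!
Along a solution of (W), `∂ₜ(w₁² + w₂²) = ∂ₓ(w₁² − w₂²)`: the nonlinear terms `∓ N w₁ w₂`
cancel. The flux `w₁² − w₂²` vanishes at `x = ±∞`, so the time derivative of the energy,
obtained by differentiating under the integral sign with the assumed domination, is zero.
The same domination bounds the energy density uniformly in `t` through the mean value
theorem, which makes the energy continuous up to the endpoints of `[0, T]`.
-/

open Real Set Filter MeasureTheory

theorem abs_sub_le_of_hasDerivAt_abs_le {f f' : ℝ → ℝ} {a b C s : ℝ}
    (hf : ContinuousOn f (Icc a b)) (hf' : ∀ u ∈ Ioo a b, HasDerivAt f (f' u) u)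
    (hC : ∀ u ∈ Ioo a b, |f' u| ≤ C) (hs : s ∈ Icc a b) :
    |f s - f a| ≤ C * (s - a) := by
  rcases hs.1.eq_or_lt with rfl | has
  · simp
  obtain ⟨c, hc, hslope⟩ := exists_hasDerivAt_eq_slope f f' has
    (hf.mono (Icc_subset_Icc_right hs.2)) fun u hu => hf' u ⟨hu.1, hu.2.trans_le hs.2⟩
  have hpos : 0 < s - a := sub_pos.2 has
  have hc' : c ∈ Ioo a b := ⟨hc.1, hc.2.trans_le hs.2⟩
  rw [← div_le_iff₀ hpos, ← abs_of_pos hpos, ← abs_div, ← hslope]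
  exact hC c hc'

section ParametricIntegral

variable {α : Type*} {F F' : ℝ → α → ℝ} {g : α → ℝ} {a b : ℝ}

theorem abs_le_abs_add_of_hasDerivAt_abs_le
    (hF : ∀ x, ContinuousOn (fun s => F s x) (Icc a b))
    (hF' : ∀ x, ∀ s ∈ Ioo a b, HasDerivAt (fun u => F u x) (F' s x) s)
    (hF'g : ∀ x, ∀ s ∈ Ioo a b, |F' s x| ≤ g x) {s : ℝ} (hs : s ∈ Icc a b) (x : α) :
    |F s x| ≤ |F a x| + |g x| * (b - a) := by
  have hdiff := abs_sub_le_of_hasDerivAt_abs_le (hF x) (hF' x) (hF'g x) hs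
  have hgs : g x * (s - a) ≤ |g x| * (b - a) :=
    mul_le_mul (le_abs_self _) (sub_le_sub_right hs.2 a) (sub_nonneg.2 hs.1) (abs_nonneg _)
  linarith [abs_sub_abs_le_abs_sub (F s x) (F a x)]

variable [MeasurableSpace α] {μ : Measure α}

theorem integral_eq_of_integral_deriv_eq_zero
    (hF_meas : ∀ s ∈ Icc a b, AEStronglyMeasurable (F s) μ) (hFa : Integrable (F a) μ)
    (hF : ∀ x, ContinuousOn (fun s => F s x) (Icc a b))
    (hF' : ∀ x, ∀ s ∈ Ioo a b, HasDerivAt (fun u => F u x) (F' s x) s)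
    (hF'_meas : ∀ s ∈ Ioo a b, AEStronglyMeasurable (F' s) μ)
    (hg : Integrable g μ) (hF'g : ∀ x, ∀ s ∈ Ioo a b, |F' s x| ≤ g x)
    (hF'_zero : ∀ s ∈ Ioo a b, ∫ x, F' s x ∂μ = 0) :
    ∀ s ∈ Icc a b, ∫ x, F s x ∂μ = ∫ x, F a x ∂μ := by
  have hbound_int : Integrable (fun x => |F a x| + |g x| * (b - a)) μ :=
    hFa.abs.add (hg.abs.mul_const _)
  have hbound : ∀ s ∈ Icc a b, ∀ x, ‖F s x‖ ≤ |F a x| + |g x| * (b - a) :=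
    fun s hs => abs_le_abs_add_of_hasDerivAt_abs_le hF hF' hF'g hs
  have hcont : ContinuousOn (fun s => ∫ x, F s x ∂μ) (Icc a b) :=
    continuousOn_of_dominated hF_meas (fun s hs => ae_of_all _ (hbound s hs)) hbound_int
      (ae_of_all _ hF)
  have hderiv : ∀ s ∈ Ioo a b, HasDerivAt (fun u => ∫ x, F u x ∂μ) 0 s := by
    intro s hs
    have hs' : s ∈ Icc a b := Ioo_subset_Icc_self hs
    have key := hasDerivAt_integral_of_dominated_loc_of_deriv_le (Ioo_mem_nhds hs.1 hs.2)
      (eventually_of_mem (Icc_mem_nhds hs.1 hs.2) hF_meas)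
      (hbound_int.mono' (hF_meas s hs') (ae_of_all _ (hbound s hs'))) (hF'_meas s hs)
      (ae_of_all _ fun x u hu => hF'g x u hu) hg (ae_of_all _ fun x u hu => hF' x u hu)
    simpa only [hF'_zero s hs] using key.2
  intro s hs
  have := abs_sub_le_of_hasDerivAt_abs_le (C := 0) hcont hderiv (by simp) hs
  rwa [zero_mul, abs_nonpos_iff, sub_eq_zero] at this

end ParametricIntegral

section Slices

variable {w : ℝ → ℝ → ℝ} {a b : ℝ}

theorem continuous_space_slice
    (hw : ContDiffOn ℝ 1 (fun p : ℝ × ℝ => w p.1 p.2) (univ ×ˢ Icc a b)) {t : ℝ}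
    (ht : t ∈ Icc a b) : Continuous fun x => w x t :=
  hw.continuousOn.comp_continuous (continuous_id.prodMk continuous_const)
    fun x => ⟨mem_univ x, ht⟩

theorem continuousOn_time_slice
    (hw : ContDiffOn ℝ 1 (fun p : ℝ × ℝ => w p.1 p.2) (univ ×ˢ Icc a b)) (x : ℝ) :
    ContinuousOn (fun t => w x t) (Icc a b) :=
  hw.continuousOn.comp (continuous_const.prodMk continuous_id).continuousOn
    fun _ ht => ⟨mem_univ x, ht⟩

theorem differentiableAt_uncurry_of_mem_Ioo
    (hw : ContDiffOn ℝ 1 (fun p : ℝ × ℝ => w p.1 p.2) (univ ×ˢ Icc a b)) (x : ℝ) {t : ℝ}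
    (ht : t ∈ Ioo a b) : DifferentiableAt ℝ (fun p : ℝ × ℝ => w p.1 p.2) (x, t) :=
  (hw.contDiffAt (prod_mem_nhds univ_mem (Icc_mem_nhds ht.1 ht.2))).differentiableAt
    one_ne_zero

theorem hasDerivAt_time_slice
    (hw : ContDiffOn ℝ 1 (fun p : ℝ × ℝ => w p.1 p.2) (univ ×ˢ Icc a b)) (x : ℝ) {t : ℝ}
    (ht : t ∈ Ioo a b) : HasDerivAt (fun s => w x s) (deriv (fun s => w x s) t) t :=
  ((differentiableAt_uncurry_of_mem_Ioo hw x ht).comp t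
    ((differentiableAt_const x).prodMk differentiableAt_id)).hasDerivAt

theorem hasDerivAt_space_slice
    (hw : ContDiffOn ℝ 1 (fun p : ℝ × ℝ => w p.1 p.2) (univ ×ˢ Icc a b)) (x : ℝ) {t : ℝ}
    (ht : t ∈ Ioo a b) : HasDerivAt (fun y => w y t) (deriv (fun y => w y t) x) x := by
  have hpair : DifferentiableAt ℝ (fun y : ℝ => (y, t)) x :=
    differentiableAt_id.prodMk (differentiableAt_const t)
  exact ((differentiableAt_uncurry_of_mem_Ioo hw x ht).comp x hpair).hasDerivAt

end Slices

noncomputable def energyDensityRate (w₁ w₂ : ℝ → ℝ → ℝ) (t x : ℝ) : ℝ :=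
  2 * (w₁ x t * deriv (fun s => w₁ x s) t + w₂ x t * deriv (fun s => w₂ x s) t)

namespace IsSolW

variable {N₀ : ℝ → ℝ} {T : ℝ} {w₁ w₂ : ℝ → ℝ → ℝ}

theorem hasDerivAt_energyDensity (h : IsSolW N₀ T w₁ w₂) (x : ℝ) {t : ℝ} (ht : t ∈ Ioo 0 T) :
    HasDerivAt (fun s => w₁ x s ^ 2 + w₂ x s ^ 2) (energyDensityRate w₁ w₂ t x) t := by
  refine (((hasDerivAt_time_slice h.1 x ht).fun_pow 2).fun_add
    ((hasDerivAt_time_slice h.2.1 x ht).fun_pow 2)).congr_deriv ?_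
  simp only [energyDensityRate]
  ring

theorem hasDerivAt_flux (h : IsSolW N₀ T w₁ w₂) (x : ℝ) {t : ℝ} (ht : t ∈ Ioo 0 T) :
    HasDerivAt (fun y => w₁ y t ^ 2 - w₂ y t ^ 2) (energyDensityRate w₁ w₂ t x) x := by
  refine (((hasDerivAt_space_slice h.1 x ht).fun_pow 2).fun_sub
    ((hasDerivAt_space_slice h.2.1 x ht).fun_pow 2)).congr_deriv ?_
  obtain ⟨hw₁, hw₂⟩ := h.2.2 x t (Ioo_subset_Icc_self ht)
  simp only [energyDensityRate, hw₁, hw₂]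
  ring

theorem aestronglyMeasurable_energyDensityRate (h : IsSolW N₀ T w₁ w₂) {t : ℝ}
    (ht : t ∈ Ioo 0 T) : AEStronglyMeasurable (energyDensityRate w₁ w₂ t) volume := by
  rw [show energyDensityRate w₁ w₂ t = deriv (fun y => w₁ y t ^ 2 - w₂ y t ^ 2) from
    funext fun x => (h.hasDerivAt_flux x ht).deriv.symm]
  exact (measurable_deriv _).aestronglyMeasurable

theorem integral_energyDensityRate_eq_zero (h : IsSolW N₀ T w₁ w₂) {t : ℝ} (ht : t ∈ Ioo 0 T)
    (hint : Integrable (energyDensityRate w₁ w₂ t))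
    (hdecay : Tendsto (fun x => w₁ x t) atTop (nhds 0) ∧ Tendsto (fun x => w₁ x t) atBot (nhds 0) ∧
      Tendsto (fun x => w₂ x t) atTop (nhds 0) ∧ Tendsto (fun x => w₂ x t) atBot (nhds 0)) :
    ∫ x, energyDensityRate w₁ w₂ t x = 0 := by
  obtain ⟨htop₁, hbot₁, htop₂, hbot₂⟩ := hdecay
  have := integral_of_hasDerivAt_of_tendsto (fun x => h.hasDerivAt_flux x ht) hint
    ((hbot₁.pow 2).sub (hbot₂.pow 2)) ((htop₁.pow 2).sub (htop₂.pow 2))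
  simpa using this

end IsSolW

/-- for a classical solution of system (W) whose squares are
integrable in `x`, which decays to `0` as `|x| → ∞`, and for which `|wᵢ·∂ₜwᵢ|`
is dominated on compact time intervals by an integrable function of `x`,
the energy `E(t) = ∫_ℝ (w₁² + w₂²) dx` is constant: `E(t) = E(0)` on `[0,T]`. -/
theorem stmt5 (N₀ : ℝ → ℝ) (T : ℝ) (w₁ w₂ : ℝ → ℝ → ℝ)
    (h : IsSolW N₀ T w₁ w₂)
    (hint : ∀ t ∈ Set.Icc (0 : ℝ) T,
      Integrable (fun x => w₁ x t ^ 2) ∧ Integrable (fun x => w₂ x t ^ 2))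
    (hdecay : ∀ t ∈ Set.Icc (0 : ℝ) T,
      Tendsto (fun x => w₁ x t) atTop (nhds 0) ∧
      Tendsto (fun x => w₁ x t) atBot (nhds 0) ∧
      Tendsto (fun x => w₂ x t) atTop (nhds 0) ∧
      Tendsto (fun x => w₂ x t) atBot (nhds 0))
    (hdom : ∀ t₀ t₁ : ℝ, 0 ≤ t₀ → t₀ ≤ t₁ → t₁ ≤ T →
      ∃ g : ℝ → ℝ, Integrable g ∧
        ∀ x : ℝ, ∀ t ∈ Set.Icc t₀ t₁,
          |w₁ x t * deriv (fun s => w₁ x s) t|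
            + |w₂ x t * deriv (fun s => w₂ x s) t| ≤ g x) :
    ∀ t ∈ Set.Icc (0 : ℝ) T,
      ∫ x : ℝ, (w₁ x t ^ 2 + w₂ x t ^ 2) = ∫ x : ℝ, (w₁ x 0 ^ 2 + w₂ x 0 ^ 2) := by
  intro t ht
  have h0 : (0 : ℝ) ∈ Icc 0 T := ⟨le_rfl, ht.1.trans ht.2⟩
  obtain ⟨g, hg, hwg⟩ := hdom 0 T le_rfl h0.2 le_rfl
  have hrate_le : ∀ x, ∀ s ∈ Ioo 0 T, |energyDensityRate w₁ w₂ s x| ≤ 2 * g x := fun x s hs => by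
    rw [energyDensityRate, abs_mul, abs_two]
    linarith [abs_add_le (w₁ x s * deriv (fun u => w₁ x u) s) (w₂ x s * deriv (fun u => w₂ x u) s),
      hwg x s (Ioo_subset_Icc_self hs)]
  refine integral_eq_of_integral_deriv_eq_zero (F := fun s x => w₁ x s ^ 2 + w₂ x s ^ 2)
    (fun s hs => (((continuous_space_slice h.1 hs).pow 2).add
      ((continuous_space_slice h.2.1 hs).pow 2)).aestronglyMeasurable)
    ((hint 0 h0).1.add (hint 0 h0).2)
    (fun x => ((continuousOn_time_slice h.1 x).pow 2).add ((continuousOn_time_slice h.2.1 x).pow 2))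
    h.hasDerivAt_energyDensity (fun s hs => h.aestronglyMeasurable_energyDensityRate hs)
    (hg.const_mul 2) hrate_le (fun s hs => ?_) t ht
  exact h.integral_energyDensityRate_eq_zero hs
    ((hg.const_mul 2).mono' (h.aestronglyMeasurable_energyDensityRate hs)
      (ae_of_all _ fun x => hrate_le x s hs)) (hdecay s (Ioo_subset_Icc_self hs))
end

section
/- Domain-of-dependence uniqueness: suppose the maps z₁(u,v) = N(u,v)·u and z₂(u,v) = N(u,v)·v are globally Lipschitz on ℝ². Let (w₁, w₂) and (ŵ₁, ŵ₂) be two classical solutions of system (W) on ℝ × [0,T], and let a < b be such that wᵢ(x,0) = ŵᵢ(x,0) for all x ∈ [a,b] and i = 1,2. Then wᵢ(x,t) = ŵᵢ(x,t) for all (x,t) in the cone {(x,t) : 0 ≤ t ≤ T, a + t ≤ x ≤ b − t}. -/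
/-
Along the characteristics `x + t = const` and `x - t = const` the system becomes
`w₁(x, τ) = w₁(x + τ, 0) - ∫₀^τ z₂(w)(x + τ - s, s) ds` and
`w₂(x, τ) = w₂(x - τ, 0) + ∫₀^τ z₁(w)(x - τ + s, s) ds`, and both characteristics through a point
of the cone stay in the cone. Hence `φ = |w₁ - ŵ₁| + |w₂ - ŵ₂|` satisfies
`φ(x, τ) ≤ 2L ∫₀^τ g` whenever `φ ≤ g(t)` on the cone, and iterating from a bound `φ ≤ K` gives
`φ ≤ K (2Lτ)ⁿ / n! → 0`.
-/

open Real Set Filter MeasureTheory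

theorem sqrt_sq_add_sq_le_abs_add_abs (a b : ℝ) : √(a ^ 2 + b ^ 2) ≤ |a| + |b| :=
  Real.sqrt_le_iff.2 ⟨by positivity, by nlinarith [sq_abs a, sq_abs b, abs_nonneg a, abs_nonneg b]⟩

theorem continuous_of_abs_sub_le_mul {f : ℝ × ℝ → ℝ} {L : ℝ} (hL : 0 ≤ L)
    (hf : ∀ p q : ℝ × ℝ, |f p - f q| ≤ L * (|p.1 - q.1| + |p.2 - q.2|)) : Continuous f := by
  refine (LipschitzWith.of_dist_le_mul (K := (2 * L).toNNReal) fun p q => ?_).continuous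
  have h₁ : |p.1 - q.1| ≤ dist p q := (Real.dist_eq _ _ ▸ le_max_left _ _ : _)
  have h₂ : |p.2 - q.2| ≤ dist p q := (Real.dist_eq _ _ ▸ le_max_right _ _ : _)
  rw [Real.dist_eq, Real.coe_toNNReal _ (by positivity)]
  nlinarith [hf p q]

theorem mul_integral_pow_div_factorial (C τ : ℝ) (n : ℕ) :
    C * ∫ s in (0 : ℝ)..τ, (C * s) ^ n / n.factorial = (C * τ) ^ (n + 1) / (n + 1).factorial := by
  simp only [mul_pow, div_eq_mul_inv, intervalIntegral.integral_mul_const,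
    intervalIntegral.integral_const_mul, integral_pow, Nat.factorial_succ, Nat.cast_mul]
  push_cast
  field_simp
  ring

/-- Picard iteration: `hstep` upgrades `φ ≤ K` to `φ ≤ K (Cτ)ⁿ / n!` for every `n`. -/
theorem nonpos_of_le_mul_integral {ι : Type*} {S : Set ι} {τ φ : ι → ℝ} {K C : ℝ}
    (hK : ∀ p ∈ S, φ p ≤ K)
    (hstep : ∀ g : ℝ → ℝ, Continuous g → (∀ q ∈ S, φ q ≤ g (τ q)) →
      ∀ p ∈ S, φ p ≤ C * ∫ s in (0 : ℝ)..τ p, g s) :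
    ∀ p ∈ S, φ p ≤ 0 := by
  have iterate (n : ℕ) : ∀ p ∈ S, φ p ≤ K * ((C * τ p) ^ n / n.factorial) := by
    induction n with
    | zero => simpa using hK
    | succ n ih =>
      intro p hp
      calc φ p ≤ C * ∫ s in (0 : ℝ)..τ p, K * ((C * s) ^ n / n.factorial) :=
            hstep _ (by fun_prop) ih p hp
        _ = K * ((C * τ p) ^ (n + 1) / (n + 1).factorial) := by
            rw [intervalIntegral.integral_const_mul, mul_left_comm, mul_integral_pow_div_factorial]
  intro p hp
  have hlim := (FloorSemiring.tendsto_pow_div_factorial_atTop (C * τ p)).const_mul K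
  rw [mul_zero] at hlim
  exact ge_of_tendsto' hlim fun n => iterate n p hp

theorem DifferentiableAt.hasDerivAt_comp_graph {u : ℝ → ℝ → ℝ} {γ : ℝ → ℝ} {γ' s : ℝ}
    (hu : DifferentiableAt ℝ (fun q : ℝ × ℝ => u q.1 q.2) (γ s, s)) (hγ : HasDerivAt γ γ' s) :
    HasDerivAt (fun r => u (γ r) r) (γ' * deriv (u · s) (γ s) + deriv (u (γ s)) s) s := by
  set D := fderiv ℝ (fun q : ℝ × ℝ => u q.1 q.2) (γ s, s)
  have hD := hu.hasFDerivAt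
  have hx : deriv (u · s) (γ s) = D (1, 0) :=
    (hD.comp_hasDerivAt (f := fun y => (y, s)) (γ s)
      ((hasDerivAt_id' _).prodMk (hasDerivAt_const (γ s) s))).deriv
  have ht : deriv (u (γ s)) s = D (0, 1) :=
    (hD.comp_hasDerivAt (f := fun r => (γ s, r)) s
      ((hasDerivAt_const s (γ s)).prodMk (hasDerivAt_id' s))).deriv
  have hsplit : D (γ', 1) = γ' * D (1, 0) + D (0, 1) := by
    rw [← smul_eq_mul, ← D.map_smul, ← D.map_add]
    simp
  rw [hx, ht, ← hsplit]
  exact hD.comp_hasDerivAt (f := fun r => (γ r, r)) s (hγ.prodMk (hasDerivAt_id' s))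

theorem eq_add_integral_along_line {u : ℝ → ℝ → ℝ} {T τ c x : ℝ} {G : ℝ → ℝ}
    (hu : ContDiffOn ℝ 1 (fun q : ℝ × ℝ => u q.1 q.2) (univ ×ˢ Icc 0 T))
    (hτ0 : 0 ≤ τ) (hτT : τ ≤ T) (hG : ContinuousOn G (Icc 0 τ))
    (huG : ∀ s ∈ Ioo 0 τ,
      -c * deriv (u · s) (x + c * (τ - s)) + deriv (u (x + c * (τ - s))) s = G s) :
    u x τ = u (x + c * τ) 0 + ∫ s in (0 : ℝ)..τ, G s := by
  have hcont : ContinuousOn (fun s => u (x + c * (τ - s)) s) (Icc 0 τ) :=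
    hu.continuousOn.comp (f := fun s => (x + c * (τ - s), s)) (by fun_prop)
      fun s hs => ⟨mem_univ _, hs.1, hs.2.trans hτT⟩
  have hderiv (s : ℝ) (hs : s ∈ Ioo 0 τ) :
      HasDerivAt (fun s => u (x + c * (τ - s)) s) (G s) s := by
    have hdiff : DifferentiableAt ℝ (fun q : ℝ × ℝ => u q.1 q.2) (x + c * (τ - s), s) :=
      (hu.contDiffAt (prod_mem_nhds univ_mem (Icc_mem_nhds hs.1 (hs.2.trans_le hτT)))
        ).differentiableAt one_ne_zero
    have hline : HasDerivAt (fun r => x + c * (τ - r)) (-c) s := by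
      simpa using (((hasDerivAt_id s).const_sub τ).const_mul c).const_add x
    simpa only [huG s hs] using hdiff.hasDerivAt_comp_graph hline
  have hftc := intervalIntegral.integral_eq_sub_of_hasDeriv_right_of_le hτ0 hcont
    (fun s hs => (hderiv s hs).hasDerivWithinAt) (hG.intervalIntegrable_of_Icc hτ0)
  simp only [sub_self, mul_zero, add_zero, sub_zero] at hftc
  linarith

theorem abs_sub_le_integral_along_line {u v : ℝ → ℝ → ℝ} {T τ c x : ℝ} {G H g : ℝ → ℝ}
    (hu : ContDiffOn ℝ 1 (fun q : ℝ × ℝ => u q.1 q.2) (univ ×ˢ Icc 0 T))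
    (hv : ContDiffOn ℝ 1 (fun q : ℝ × ℝ => v q.1 q.2) (univ ×ˢ Icc 0 T))
    (hτ0 : 0 ≤ τ) (hτT : τ ≤ T) (hG : ContinuousOn G (Icc 0 τ)) (hH : ContinuousOn H (Icc 0 τ))
    (huG : ∀ s ∈ Ioo 0 τ,
      -c * deriv (u · s) (x + c * (τ - s)) + deriv (u (x + c * (τ - s))) s = G s)
    (hvH : ∀ s ∈ Ioo 0 τ,
      -c * deriv (v · s) (x + c * (τ - s)) + deriv (v (x + c * (τ - s))) s = H s)
    (h0 : u (x + c * τ) 0 = v (x + c * τ) 0) (hg : IntervalIntegrable g volume 0 τ)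
    (hGg : ∀ s ∈ Icc 0 τ, |G s - H s| ≤ g s) :
    |u x τ - v x τ| ≤ ∫ s in (0 : ℝ)..τ, g s := by
  rw [eq_add_integral_along_line hu hτ0 hτT hG huG, eq_add_integral_along_line hv hτ0 hτT hH hvH,
    h0, add_sub_add_left_eq_sub, ← intervalIntegral.integral_sub
      (hG.intervalIntegrable_of_Icc hτ0) (hH.intervalIntegrable_of_Icc hτ0)]
  rw [← Real.norm_eq_abs]
  exact intervalIntegral.norm_integral_le_of_norm_le hτ0
    (ae_of_all _ fun s hs => hGg s (Ioc_subset_Icc_self hs)) hg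

def dependenceCone (a b T : ℝ) : Set (ℝ × ℝ) :=
  {p | 0 ≤ p.2 ∧ p.2 ≤ T ∧ a + p.2 ≤ p.1 ∧ p.1 ≤ b - p.2}

section Solutions

variable {N₀ : ℝ → ℝ} {T L : ℝ} {w₁ w₂ v₁ v₂ : ℝ → ℝ → ℝ}

theorem IsSolW.continuousOn_comp (hw : IsSolW N₀ T w₁ w₂) {f : ℝ × ℝ → ℝ} (hf : Continuous f)
    {γ : ℝ → ℝ} (hγ : Continuous γ) {τ : ℝ} (hτT : τ ≤ T) :
    ContinuousOn (fun s => f (w₁ (γ s) s, w₂ (γ s) s)) (Icc 0 τ) := by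
  have hmaps : MapsTo (fun s => (γ s, s)) (Icc 0 τ) (univ ×ˢ Icc 0 T) :=
    fun s hs => ⟨mem_univ _, hs.1, hs.2.trans hτT⟩
  exact hf.comp_continuousOn ((hw.1.continuousOn.comp (by fun_prop) hmaps).prodMk
    (hw.2.1.continuousOn.comp (by fun_prop) hmaps))

theorem IsSolW.abs_fst_sub_le (hw : IsSolW N₀ T w₁ w₂) (hv : IsSolW N₀ T v₁ v₂) (hL : 0 ≤ L)
    (hz : ∀ p q : ℝ × ℝ, |Ncoef N₀ p.1 p.2 * p.2 - Ncoef N₀ q.1 q.2 * q.2|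
      ≤ L * (|p.1 - q.1| + |p.2 - q.2|))
    (hzc : Continuous fun p : ℝ × ℝ => Ncoef N₀ p.1 p.2 * p.2) {x τ : ℝ} (hτ0 : 0 ≤ τ)
    (hτT : τ ≤ T) (h0 : w₁ (x + τ) 0 = v₁ (x + τ) 0) {g : ℝ → ℝ} (hg : Continuous g)
    (hwv : ∀ s ∈ Icc 0 τ, |w₁ (x + (τ - s)) s - v₁ (x + (τ - s)) s|
      + |w₂ (x + (τ - s)) s - v₂ (x + (τ - s)) s| ≤ g s) :
    |w₁ x τ - v₁ x τ| ≤ L * ∫ s in (0 : ℝ)..τ, g s := by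
  rw [← intervalIntegral.integral_const_mul]
  refine abs_sub_le_integral_along_line (c := 1) hw.1 hv.1 hτ0 hτT
    (hw.continuousOn_comp hzc (γ := fun s => x + 1 * (τ - s)) (by fun_prop) hτT).neg
    (hv.continuousOn_comp hzc (γ := fun s => x + 1 * (τ - s)) (by fun_prop) hτT).neg
    ?_ ?_ (by rwa [one_mul]) ((hg.const_mul L).intervalIntegrable 0 τ) ?_
  · intro s hs
    dsimp only [Pi.neg_apply]
    linarith [(hw.2.2 (x + 1 * (τ - s)) s ⟨hs.1.le, hs.2.le.trans hτT⟩).1]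
  · intro s hs
    dsimp only [Pi.neg_apply]
    linarith [(hv.2.2 (x + 1 * (τ - s)) s ⟨hs.1.le, hs.2.le.trans hτT⟩).1]
  · intro s hs
    simp only [Pi.neg_apply, neg_sub_neg, one_mul]
    rw [abs_sub_comm]
    exact (hz (w₁ _ s, w₂ _ s) (v₁ _ s, v₂ _ s)).trans (mul_le_mul_of_nonneg_left (hwv s hs) hL)

theorem IsSolW.abs_snd_sub_le (hw : IsSolW N₀ T w₁ w₂) (hv : IsSolW N₀ T v₁ v₂) (hL : 0 ≤ L)
    (hz : ∀ p q : ℝ × ℝ, |Ncoef N₀ p.1 p.2 * p.1 - Ncoef N₀ q.1 q.2 * q.1|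
      ≤ L * (|p.1 - q.1| + |p.2 - q.2|))
    (hzc : Continuous fun p : ℝ × ℝ => Ncoef N₀ p.1 p.2 * p.1) {x τ : ℝ} (hτ0 : 0 ≤ τ)
    (hτT : τ ≤ T) (h0 : w₂ (x - τ) 0 = v₂ (x - τ) 0) {g : ℝ → ℝ} (hg : Continuous g)
    (hwv : ∀ s ∈ Icc 0 τ, |w₁ (x - (τ - s)) s - v₁ (x - (τ - s)) s|
      + |w₂ (x - (τ - s)) s - v₂ (x - (τ - s)) s| ≤ g s) :
    |w₂ x τ - v₂ x τ| ≤ L * ∫ s in (0 : ℝ)..τ, g s := by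
  rw [← intervalIntegral.integral_const_mul]
  refine abs_sub_le_integral_along_line (c := -1) hw.2.1 hv.2.1 hτ0 hτT
    (hw.continuousOn_comp hzc (γ := fun s => x + -1 * (τ - s)) (by fun_prop) hτT)
    (hv.continuousOn_comp hzc (γ := fun s => x + -1 * (τ - s)) (by fun_prop) hτT)
    ?_ ?_ (by rwa [neg_one_mul, ← sub_eq_add_neg]) ((hg.const_mul L).intervalIntegrable 0 τ) ?_
  · intro s hs
    dsimp only
    linarith [(hw.2.2 (x + -1 * (τ - s)) s ⟨hs.1.le, hs.2.le.trans hτT⟩).2]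
  · intro s hs
    dsimp only
    linarith [(hv.2.2 (x + -1 * (τ - s)) s ⟨hs.1.le, hs.2.le.trans hτT⟩).2]
  · intro s hs
    simp only [neg_one_mul, ← sub_eq_add_neg]
    exact (hz (w₁ _ s, w₂ _ s) (v₁ _ s, v₂ _ s)).trans (mul_le_mul_of_nonneg_left (hwv s hs) hL)

theorem IsSolW.abs_sub_add_abs_sub_le (hw : IsSolW N₀ T w₁ w₂) (hv : IsSolW N₀ T v₁ v₂)
    (hL : 0 ≤ L)
    (hz₁ : ∀ p q : ℝ × ℝ, |Ncoef N₀ p.1 p.2 * p.1 - Ncoef N₀ q.1 q.2 * q.1|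
      ≤ L * (|p.1 - q.1| + |p.2 - q.2|))
    (hz₂ : ∀ p q : ℝ × ℝ, |Ncoef N₀ p.1 p.2 * p.2 - Ncoef N₀ q.1 q.2 * q.2|
      ≤ L * (|p.1 - q.1| + |p.2 - q.2|))
    {a b : ℝ} (h0 : ∀ x ∈ Icc a b, w₁ x 0 = v₁ x 0 ∧ w₂ x 0 = v₂ x 0)
    {g : ℝ → ℝ} (hg : Continuous g)
    (hwv : ∀ q ∈ dependenceCone a b T,
      |w₁ q.1 q.2 - v₁ q.1 q.2| + |w₂ q.1 q.2 - v₂ q.1 q.2| ≤ g q.2)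
    {p : ℝ × ℝ} (hp : p ∈ dependenceCone a b T) :
    |w₁ p.1 p.2 - v₁ p.1 p.2| + |w₂ p.1 p.2 - v₂ p.1 p.2| ≤ 2 * L * ∫ s in (0 : ℝ)..p.2, g s := by
  obtain ⟨y, τ⟩ := p
  obtain ⟨hτ0, hτT, hay, hyb⟩ := hp
  dsimp only at hτ0 hτT hay hyb ⊢
  have h₁ := hw.abs_fst_sub_le hv hL hz₂ (continuous_of_abs_sub_le_mul hL hz₂) hτ0 hτT
    (h0 _ ⟨by linarith, by linarith⟩).1 hg fun s hs =>
      hwv (y + (τ - s), s) ⟨hs.1, hs.2.trans hτT, by linarith [hs.2], by linarith [hs.1]⟩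
  have h₂ := hw.abs_snd_sub_le hv hL hz₁ (continuous_of_abs_sub_le_mul hL hz₁) hτ0 hτT
    (h0 _ ⟨by linarith, by linarith⟩).2 hg fun s hs =>
      hwv (y - (τ - s), s) ⟨hs.1, hs.2.trans hτT, by linarith [hs.1], by linarith [hs.2]⟩
  linarith

end Solutions

theorem stmt10_general (N₀ : ℝ → ℝ) (T : ℝ) (L : ℝ)
    (hz₁ : ∀ p q : ℝ × ℝ,
      |Ncoef N₀ p.1 p.2 * p.1 - Ncoef N₀ q.1 q.2 * q.1|
        ≤ L * Real.sqrt ((p.1 - q.1) ^ 2 + (p.2 - q.2) ^ 2))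
    (hz₂ : ∀ p q : ℝ × ℝ,
      |Ncoef N₀ p.1 p.2 * p.2 - Ncoef N₀ q.1 q.2 * q.2|
        ≤ L * Real.sqrt ((p.1 - q.1) ^ 2 + (p.2 - q.2) ^ 2))
    (w₁ w₂ v₁ v₂ : ℝ → ℝ → ℝ)
    (hw : IsSolW N₀ T w₁ w₂) (hv : IsSolW N₀ T v₁ v₂)
    (a b : ℝ)
    (h0 : ∀ x ∈ Set.Icc a b, w₁ x 0 = v₁ x 0 ∧ w₂ x 0 = v₂ x 0) :
    ∀ t : ℝ, 0 ≤ t → t ≤ T → ∀ x : ℝ, a + t ≤ x → x ≤ b - t →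
      w₁ x t = v₁ x t ∧ w₂ x t = v₂ x t := by
  intro t ht0 htT x hax hxb
  have hL : 0 ≤ L := by simpa using (abs_nonneg _).trans (hz₁ (1, 0) (0, 0))
  have hsqrt (p q : ℝ × ℝ) := mul_le_mul_of_nonneg_left
    (sqrt_sq_add_sq_le_abs_add_abs (p.1 - q.1) (p.2 - q.2)) hL
  have hrect : Icc a b ×ˢ Icc 0 T ⊆ univ ×ˢ Icc 0 T := prod_mono (subset_univ _) subset_rfl
  obtain ⟨K, hK⟩ := (isCompact_Icc.prod isCompact_Icc).exists_bound_of_continuousOn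
    ((((hw.1.sub hv.1).continuousOn).abs.add ((hw.2.1.sub hv.2.1).continuousOn).abs).mono hrect)
  have hcone := nonpos_of_le_mul_integral (S := dependenceCone a b T) (τ := Prod.snd) (K := K)
    (C := 2 * L)
    (fun p ⟨hp0, hpT, hap, hpb⟩ =>
      (le_abs_self _).trans (hK p ⟨⟨by linarith, by linarith⟩, hp0, hpT⟩))
    (fun g hg hwv p hp => hw.abs_sub_add_abs_sub_le hv hL (fun p q => (hz₁ p q).trans (hsqrt p q))
      (fun p q => (hz₂ p q).trans (hsqrt p q)) h0 hg hwv hp)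
    (x, t) ⟨ht0, htT, hax, hxb⟩
  simp only [Pi.add_apply] at hcone
  have h₁ := abs_nonneg (w₁ x t - v₁ x t)
  have h₂ := abs_nonneg (w₂ x t - v₂ x t)
  exact ⟨sub_eq_zero.1 (abs_eq_zero.1 (by linarith)), sub_eq_zero.1 (abs_eq_zero.1 (by linarith))⟩

/-- domain-of-dependence uniqueness: if `z₁(u,v) = N(u,v)·u` and
`z₂(u,v) = N(u,v)·v` are globally Lipschitz on `ℝ²` (Euclidean norm), and two
classical solutions of system (W) agree at `t = 0` on `[a,b]`, then they agree
on the cone `{(x,t) : 0 ≤ t ≤ T, a + t ≤ x ≤ b − t}`. -/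
theorem stmt10 (N₀ : ℝ → ℝ) (T : ℝ) (L : ℝ)
    (hz₁ : ∀ p q : ℝ × ℝ,
      |Ncoef N₀ p.1 p.2 * p.1 - Ncoef N₀ q.1 q.2 * q.1|
        ≤ L * Real.sqrt ((p.1 - q.1) ^ 2 + (p.2 - q.2) ^ 2))
    (hz₂ : ∀ p q : ℝ × ℝ,
      |Ncoef N₀ p.1 p.2 * p.2 - Ncoef N₀ q.1 q.2 * q.2|
        ≤ L * Real.sqrt ((p.1 - q.1) ^ 2 + (p.2 - q.2) ^ 2))
    (w₁ w₂ v₁ v₂ : ℝ → ℝ → ℝ)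
    (hw : IsSolW N₀ T w₁ w₂) (hv : IsSolW N₀ T v₁ v₂)
    (a b : ℝ) (hab : a < b)
    (h0 : ∀ x ∈ Set.Icc a b, w₁ x 0 = v₁ x 0 ∧ w₂ x 0 = v₂ x 0) :
    ∀ t : ℝ, 0 ≤ t → t ≤ T → ∀ x : ℝ, a + t ≤ x → x ≤ b - t →
      w₁ x t = v₁ x t ∧ w₂ x t = v₂ x t :=
  stmt10_general N₀ T L hz₁ hz₂ w₁ w₂ v₁ v₂ hw hv a b h0
end
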